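/- arXiv:1612.04204 — 4 statements merged into one kernel-verified Lean document; each statement's English description precedes it below -/
import Mathlib

section
/- Let H be a finite group with center C, and let ψ be a nontrivial character of C with values in the nonzero complex numbers. Let (X, ρ) be a complex representation of H such that ρ restricted to C acts by the scalar character ψ. Suppose A and Ā are subgroups of H with A ∩ C = {1} and Ā ∩ C = {1}, such that each commutator a b a⁻¹ b⁻¹ lies in C for a ∈ A, b ∈ Ā, and such that for all distinct b, b' in Ā the characters a ↦ ψ(a b a⁻¹ b⁻¹) and a ↦ ψ(a b' a⁻¹ b'⁻¹) of A are distinct. If v ∈ X is a nonzero vector fixed by A, then the sum ∑_{b ∈ Ā} ρ(b)·v is nonzero. -/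
/-- Lemma 5.4: nonvanishing of the averaged vector in a Heisenberg-type
representation.  `H` is a finite group with center `C`, `ψ` a nontrivial
character of `C`, and `ρ` a representation of `H` on which `C` acts via the
scalar character `ψ`.  `A`, `Abar` are subgroups meeting `C` trivially, with
commutators `[A, Abar] ⊆ C` and pairwise distinct commutator characters on `A`.
If `v ≠ 0` is fixed by `A`, then `∑_{b ∈ Abar} ρ(b)·v ≠ 0`. -/
theorem stmt_0 {H : Type*} [Group H] [Fintype H]
    (ψ : Subgroup.center H →* ℂˣ) (hψ : ψ ≠ 1)
    {X : Type*} [AddCommGroup X] [Module ℂ X]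
    (ρ : Representation ℂ H X)
    (hρC : ∀ c : Subgroup.center H, ρ (c : H) = (ψ c : ℂ) • (1 : X →ₗ[ℂ] X))
    (A Abar : Subgroup H) [Fintype ↥Abar]
    (hA : A ⊓ Subgroup.center H = ⊥) (hAbar : Abar ⊓ Subgroup.center H = ⊥)
    (hcomm : ∀ a b : H, a ∈ A → b ∈ Abar → a * b * a⁻¹ * b⁻¹ ∈ Subgroup.center H)
    (hdistinct : ∀ b b' : H, ∀ (hb : b ∈ Abar) (hb' : b' ∈ Abar), b ≠ b' →
      ∃ a : H, ∃ ha : a ∈ A,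
        ψ ⟨a * b * a⁻¹ * b⁻¹, hcomm a b ha hb⟩ ≠ ψ ⟨a * b' * a⁻¹ * b'⁻¹, hcomm a b' ha hb'⟩)
    (v : X) (hv : v ≠ 0) (hfix : ∀ a ∈ A, ρ a v = v) :
    ∑ b : ↥Abar, ρ (b : H) v ≠ 0 := by
  classical
  intro hS
  haveI : Fintype ↥A := Fintype.ofFinite _
  -- multiplicativity of the commutator in the first variable
  have hmulH : ∀ (b : H) (hb : b ∈ Abar) (a a' : H), a ∈ A → a' ∈ A →
      (a*a')*b*(a*a')⁻¹*b⁻¹ = (a*b*a⁻¹*b⁻¹) * (a'*b*a'⁻¹*b⁻¹) := by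
    intro b hb a a' _ ha'
    have hz : ∀ g : H, a'*b*a'⁻¹*b⁻¹ * g = g * (a'*b*a'⁻¹*b⁻¹) :=
      fun g => (Subgroup.mem_center_iff.mp (hcomm _ _ ha' hb) g).symm
    set c' := a'*b*a'⁻¹*b⁻¹ with hc'
    have h1 : a'*b*a'⁻¹ = c' * b := by rw [hc']; group
    calc (a*a')*b*(a*a')⁻¹*b⁻¹
        = a*(a'*b*a'⁻¹)*a⁻¹*b⁻¹ := by group
      _ = a*(c'*b)*a⁻¹*b⁻¹ := by rw [h1]
      _ = (a*c')*(b*a⁻¹*b⁻¹) := by group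
      _ = (c'*a)*(b*a⁻¹*b⁻¹) := by rw [← hz a]
      _ = c'*(a*b*a⁻¹*b⁻¹) := by group
      _ = (a*b*a⁻¹*b⁻¹)*c' := hz _
  have hmul : ∀ (b : H) (hb : b ∈ Abar) (a a' : ↥A),
      ψ ⟨((a:H)*(a':H))*b*((a:H)*(a':H))⁻¹*b⁻¹, hcomm _ _ (mul_mem a.2 a'.2) hb⟩
        = ψ ⟨(a:H)*b*(a:H)⁻¹*b⁻¹, hcomm _ _ a.2 hb⟩
          * ψ ⟨(a':H)*b*(a':H)⁻¹*b⁻¹, hcomm _ _ a'.2 hb⟩ := by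
    intro b hb a a'
    rw [← map_mul]
    congr 1
    exact Subtype.ext (hmulH b hb _ _ a.2 a'.2)
  let χ : ↥Abar → (↥A →* ℂ) := fun b =>
    { toFun := fun a => (ψ ⟨(a:H)*(b:H)*(a:H)⁻¹*(b:H)⁻¹, hcomm _ _ a.2 b.2⟩ : ℂ)
      map_one' := by
        have he : (⟨((1:↥A):H)*(b:H)*((1:↥A):H)⁻¹*(b:H)⁻¹,
            hcomm _ _ (1:↥A).2 b.2⟩ : Subgroup.center H) = 1 :=
          Subtype.ext (by simp)
        rw [he, map_one]; rfl
      map_mul' := by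
        intro a a'
        show (ψ ⟨((a:H)*(a':H))*(b:H)*((a:H)*(a':H))⁻¹*(b:H)⁻¹,
          hcomm _ _ (mul_mem a.2 a'.2) b.2⟩ : ℂ) = _
        rw [hmul (b:H) b.2 a a']
        push_cast; ring }
  -- key eigen-equation
  have key : ∀ (a : ↥A) (b : ↥Abar),
      ρ (a:H) (ρ (b:H) v) = χ b a • ρ (b:H) v := by
    intro a b
    set c : Subgroup.center H := ⟨(a:H)*(b:H)*(a:H)⁻¹*(b:H)⁻¹, hcomm _ _ a.2 b.2⟩ with hc
    have hfac : (a:H) * (b:H) = (c:H) * ((b:H) * (a:H)) := by rw [hc]; group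
    have hva : ρ (a:H) v = v := hfix _ a.2
    have e1 : ρ (a:H) (ρ (b:H) v) = ρ ((a:H)*(b:H)) v := by
      rw [map_mul, Module.End.mul_apply]
    have e2 : ρ ((c:H) * ((b:H) * (a:H))) v = ρ (c:H) (ρ (b:H) (ρ (a:H) v)) := by
      rw [map_mul ρ ((c:H)) ((b:H)*(a:H)), map_mul ρ ((b:H)) ((a:H))]
      rfl
    rw [e1, hfac, e2, hva, hρC c]
    simp [χ, hc]
  set b0 : ↥Abar := ⟨1, one_mem _⟩ with hb0
  have hsum : (0 : X) = ∑ b : ↥Abar, (∑ a : ↥A, χ b a) • ρ (b:H) v := by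
    calc (0 : X) = ∑ a : ↥A, ρ (a:H) (∑ b : ↥Abar, ρ (b:H) v) := by
          rw [hS]; simp
      _ = ∑ a : ↥A, ∑ b : ↥Abar, ρ (a:H) (ρ (b:H) v) := by
          simp [map_sum]
      _ = ∑ b : ↥Abar, ∑ a : ↥A, χ b a • ρ (b:H) v := by
          rw [Finset.sum_comm]
          exact Finset.sum_congr rfl fun b _ => Finset.sum_congr rfl fun a _ => key a b
      _ = ∑ b : ↥Abar, (∑ a : ↥A, χ b a) • ρ (b:H) v := by
          simp [Finset.sum_smul]
  -- all terms with b ≠ 1 vanish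
  have hzero : ∀ b : ↥Abar, b ≠ b0 → (∑ a : ↥A, χ b a) = 0 := by
    intro b hb
    apply sum_hom_units_eq_zero
    intro hcontr
    have hbne : (b:H) ≠ (1:H) := fun h => hb (Subtype.ext h)
    obtain ⟨a, ha, hne⟩ := hdistinct (b:H) 1 b.2 (one_mem _) hbne
    apply hne
    have h1 : (⟨a*1*a⁻¹*1⁻¹, hcomm a 1 ha (one_mem _)⟩ : Subgroup.center H) = 1 :=
      Subtype.ext (by rw [OneMemClass.coe_one]; group)
    rw [h1, map_one]
    have hval := DFunLike.congr_fun hcontr (⟨a, ha⟩ : ↥A)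
    have hval' : (ψ ⟨a*(b:H)*a⁻¹*(b:H)⁻¹, hcomm _ _ ha b.2⟩ : ℂ) = ((1:ℂˣ):ℂ) := by
      rw [Units.val_one]; exact hval
    exact Units.ext hval'
  have hχ1 : ∀ a : ↥A, χ b0 a = 1 := by
    intro a
    have h1 : (⟨(a:H)*(b0:H)*(a:H)⁻¹*(b0:H)⁻¹, hcomm _ _ a.2 b0.2⟩ : Subgroup.center H) = 1 :=
      Subtype.ext (by rw [OneMemClass.coe_one]; simp [hb0])
    show (ψ ⟨(a:H)*(b0:H)*(a:H)⁻¹*(b0:H)⁻¹, hcomm _ _ a.2 b0.2⟩ : ℂ) = 1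
    rw [h1, map_one]; rfl
  have hb0term : (0 : X) = (Fintype.card ↥A : ℂ) • v := by
    rw [hsum, Finset.sum_eq_single b0]
    · simp only [hχ1, Finset.sum_const, nsmul_eq_mul, mul_one]
      have hρ1 : ρ ((b0:H)) v = v := by rw [hb0]; simp
      rw [hρ1, Finset.card_univ]
    · intro b _ hb; rw [hzero b hb, zero_smul]
    · intro h; exact absurd (Finset.mem_univ b0) h
  have hc : (Fintype.card ↥A : ℂ) ≠ 0 := by
    exact_mod_cast Fintype.card_ne_zero
  rcases smul_eq_zero.mp hb0term.symm with h | h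
  · exact hc h
  · exact hv h
end

section
/- Let H be a finite group with center C and nontrivial central character ψ : C → ℂˣ, and let (X, ρ) be a representation of H on which C acts by ψ. Let A, Ā be subgroups of H with A ∩ C = Ā ∩ C = {1}, such that every commutator [a, b] with a ∈ A, b ∈ Ā lies in C, and such that the map b ↦ (a ↦ ψ([a, b])) from Ā to characters of A is injective. If v ∈ X is a nonzero vector fixed by every element of A, then the family of vectors {ρ(b)·v : b ∈ Ā} is linearly independent over ℂ. -/
/-- Eigenvectors for pairwise distinct "characters" of a family of operators
are linearly independent. -/
theorem eig_indep {X : Type*} [AddCommGroup X] [Module ℂ X] {ι κ : Type*}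
    (T : κ → X →ₗ[ℂ] X) (χ : ι → κ → ℂ) (w : ι → X)
    (hw : ∀ i, w i ≠ 0) (heig : ∀ i k, T k (w i) = χ i k • w i)
    (hsep : ∀ i j, i ≠ j → ∃ k, χ i k ≠ χ j k) :
    LinearIndependent ℂ w := by
  classical
  rw [linearIndependent_iff']
  intro s
  induction s using Finset.induction_on with
  | empty => intro g _ i hi; simp at hi
  | @insert b0 t hb0 ih =>
    intro g hsum i hi
    have ht : ∀ b ∈ t, g b = 0 := by
      intro b hb
      have hbne : b ≠ b0 := fun h => hb0 (h ▸ hb)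
      obtain ⟨k, hk⟩ := hsep b b0 hbne
      set g' : ι → ℂ := fun i => g i * (χ i k - χ b0 k) with hg'
      have happ : ∑ i ∈ insert b0 t, g' i • w i = 0 := by
        have h1 : T k (∑ i ∈ insert b0 t, g i • w i)
            - χ b0 k • (∑ i ∈ insert b0 t, g i • w i)
            = ∑ i ∈ insert b0 t, g' i • w i := by
          rw [map_sum, Finset.smul_sum, ← Finset.sum_sub_distrib]
          refine Finset.sum_congr rfl fun i _ => ?_
          rw [map_smul, heig, hg']
          simp only [smul_smul]
          rw [← sub_smul]
          ring_nf
        rw [hsum] at h1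
        simpa using h1.symm
      have h2 : ∑ i ∈ t, g' i • w i = 0 := by
        rw [Finset.sum_insert hb0] at happ
        have : g' b0 = 0 := by simp [hg']
        rw [this] at happ
        simpa using happ
      have := ih g' h2 b hb
      have hkne : χ b k - χ b0 k ≠ 0 := sub_ne_zero.mpr hk
      exact (mul_eq_zero.mp this).resolve_right hkne
    have hb0z : g b0 = 0 := by
      rw [Finset.sum_insert hb0] at hsum
      have : ∑ i ∈ t, g i • w i = 0 :=
        Finset.sum_eq_zero fun i hi => by rw [ht i hi, zero_smul]
      rw [this, add_zero] at hsum
      rcases smul_eq_zero.mp hsum with h | h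
      · exact h
      · exact absurd h (hw b0)
    rcases Finset.mem_insert.mp hi with rfl | hi
    · exact hb0z
    · exact ht i hi

/-- Key step of Lemma 5.4: the vectors `ρ(b)·v`, `b ∈ Abar`, are eigenvectors of
`A` for pairwise distinct characters `a ↦ ψ([a,b])`, hence linearly independent. -/
theorem stmt_1 {H : Type*} [Group H] [Fintype H]
    (ψ : Subgroup.center H →* ℂˣ) (hψ : ψ ≠ 1)
    {X : Type*} [AddCommGroup X] [Module ℂ X]
    (ρ : Representation ℂ H X)
    (hρC : ∀ c : Subgroup.center H, ρ (c : H) = (ψ c : ℂ) • (1 : X →ₗ[ℂ] X))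
    (A Abar : Subgroup H)
    (hA : A ⊓ Subgroup.center H = ⊥) (hAbar : Abar ⊓ Subgroup.center H = ⊥)
    (hcomm : ∀ a b : H, a ∈ A → b ∈ Abar → a * b * a⁻¹ * b⁻¹ ∈ Subgroup.center H)
    (hinj : ∀ b b' : H, ∀ (hb : b ∈ Abar) (hb' : b' ∈ Abar),
      (∀ a : H, ∀ ha : a ∈ A,
        ψ ⟨a * b * a⁻¹ * b⁻¹, hcomm a b ha hb⟩ = ψ ⟨a * b' * a⁻¹ * b'⁻¹, hcomm a b' ha hb'⟩) →
      b = b')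
    (v : X) (hv : v ≠ 0) (hfix : ∀ a ∈ A, ρ a v = v) :
    LinearIndependent ℂ (fun b : ↥Abar => ρ (b : H) v) := by
  refine eig_indep (fun a : ↥A => ρ (a : H))
      (fun (b : ↥Abar) (a : ↥A) => (ψ ⟨(a : H) * (b : H) * (a : H)⁻¹ * (b : H)⁻¹, hcomm a b a.2 b.2⟩ : ℂ))
      _ ?_ ?_ ?_
  · -- w b ≠ 0
    intro b hb0
    apply hv
    have : ρ ((b : H)⁻¹) (ρ (b : H) v) = v := by
      rw [← Module.End.mul_apply, ← map_mul, inv_mul_cancel, map_one, Module.End.one_apply]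
    rw [hb0, map_zero] at this
    exact this.symm
  · -- eigenvector property
    intro b a
    set c : Subgroup.center H := ⟨(a : H) * (b : H) * (a : H)⁻¹ * (b : H)⁻¹, hcomm a b a.2 b.2⟩
    have hab : (a : H) * (b : H) = (c : H) * ((b : H) * (a : H)) := by
      simp only [c]
      group
    have key : ∀ (x y : H) (u : X), ρ (x * y) u = ρ x (ρ y u) := fun x y u => by
      rw [map_mul]; rfl
    calc ρ (a : H) (ρ (b : H) v)
        = ρ ((a : H) * (b : H)) v := (key _ _ _).symm
      _ = ρ ((c : H) * ((b : H) * (a : H))) v := by rw [hab]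
      _ = ρ (c : H) (ρ (b : H) (ρ (a : H) v)) := by rw [key (c : H) ((b : H) * (a : H)), key (b : H) (a : H)]
      _ = ρ (c : H) (ρ (b : H) v) := by rw [hfix a a.2]
      _ = (ψ c : ℂ) • ρ (b : H) v := by rw [hρC c]; simp
  · -- separation
    intro b b' hne
    by_contra h
    push_neg at h
    apply hne
    apply Subtype.ext
    apply hinj b b' b.2 b'.2
    intro a ha
    have := h ⟨a, ha⟩
    exact Units.ext this
end

section
/- Let G be a group and suppose K is a subgroup admitting a decomposition K = (K ∩ U)·(K ∩ M)·(K ∩ Ū) with respect to subgroups U, M, Ū of G, where the product map U × M × Ū → G is injective (uniqueness of decomposition). Suppose a group Γ acts on G by automorphisms preserving each of U, M, Ū setwise, and let K be Γ-stable. Then K^Γ = (K^Γ ∩ U^Γ)·(K^Γ ∩ M^Γ)·(K^Γ ∩ Ū^Γ); that is, the fixed-point subgroup inherits the Iwahori-type decomposition. -/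
/-- Galois descent of Iwahori-type decompositions (proof of Proposition 4.3(a)):
if `K = (K∩U)(K∩M)(K∩Ū)` with unique factorization, and a group `Γ` acts on `G`
by automorphisms preserving `U`, `M`, `Ū` and `K`, then every `Γ`-fixed element
of `K` factors as a product of `Γ`-fixed elements of `K∩U`, `K∩M`, `K∩Ū`. -/
theorem stmt_9 {G : Type*} [Group G] (U M Ubar K : Subgroup G)
    {Γ : Type*} [Group Γ] [MulDistribMulAction Γ G]
    (hinj : ∀ u u' m m' w w' : G, u ∈ U → u' ∈ U → m ∈ M → m' ∈ M →
      w ∈ Ubar → w' ∈ Ubar → u * m * w = u' * m' * w' → u = u' ∧ m = m' ∧ w = w')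
    (hdec : ∀ k ∈ K, ∃ u m w : G, u ∈ K ⊓ U ∧ m ∈ K ⊓ M ∧ w ∈ K ⊓ Ubar ∧ k = u * m * w)
    (hU : ∀ (γ : Γ) (g : G), g ∈ U → γ • g ∈ U)
    (hM : ∀ (γ : Γ) (g : G), g ∈ M → γ • g ∈ M)
    (hUbar : ∀ (γ : Γ) (g : G), g ∈ Ubar → γ • g ∈ Ubar)
    (hK : ∀ (γ : Γ) (g : G), g ∈ K → γ • g ∈ K) :
    ∀ k ∈ K, (∀ γ : Γ, γ • k = k) →
      ∃ u m w : G, u ∈ K ⊓ U ∧ m ∈ K ⊓ M ∧ w ∈ K ⊓ Ubar ∧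
        (∀ γ : Γ, γ • u = u) ∧ (∀ γ : Γ, γ • m = m) ∧ (∀ γ : Γ, γ • w = w) ∧
        k = u * m * w := by
  intro k hk hfix
  obtain ⟨u, m, w, hu, hm, hw, hkmul⟩ := hdec k hk
  have key : ∀ γ : Γ, γ • u = u ∧ γ • m = m ∧ γ • w = w := by
    intro γ
    have : (γ • u) * (γ • m) * (γ • w) = u * m * w := by
      rw [← smul_mul', ← smul_mul', ← hkmul, hfix γ]
    exact hinj _ _ _ _ _ _ (hU γ u hu.2) hu.2 (hM γ m hm.2) hm.2
      (hUbar γ w hw.2) hw.2 this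
  exact ⟨u, m, w, hu, hm, hw, fun γ => (key γ).1, fun γ => (key γ).2.1,
    fun γ => (key γ).2.2, hkmul⟩
end

section
/- Let G be a group, K₊ a subgroup of G, and K^U, K^{Ū} subgroups with K^U ⊆ K₊, K^{Ū} ⊆ K₊; let M be a subgroup of G with K₊ = K^U (K₊ ∩ M) K^{Ū}, and let K̂_M be a subgroup of M containing K₊ ∩ M, normalizing K₊, and normalizing K^U. Then K̂ := K^U · K̂_M · K₊ is a subgroup of G equal to K^U K̂_M K^{Ū}, and the natural homomorphism K̂_M → K̂/K₊ is surjective with kernel K₊ ∩ M, inducing an isomorphism K̂/K₊ ≅ K̂_M/(K₊ ∩ M). -/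
open scoped Pointwise

/-- Group-theoretic content of Proposition 4.3(b): `K̂ := K^U · K̂_M · K₊` is a
subgroup equal to `K^U K̂_M K^Ū`, `K₊` is normal in `K̂`, and the natural map
`K̂_M → K̂/K₊` is surjective with kernel `K₊ ∩ M`, inducing
`K̂/K₊ ≅ K̂_M/(K₊ ∩ M)`. -/
theorem stmt_11 {G : Type*} [Group G] (M KU KUb Kp KMhat : Subgroup G)
    (hKM_M : KMhat ≤ M)
    (hsub : Kp ⊓ M ≤ KMhat)
    (hnormKp : ∀ m ∈ KMhat, ∀ x ∈ Kp, m * x * m⁻¹ ∈ Kp)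
    (hnormKU : ∀ m ∈ KMhat, ∀ u ∈ KU, m * u * m⁻¹ ∈ KU)
    (hnormPU : ∀ u ∈ KU, ∀ x ∈ Kp, u * x * u⁻¹ ∈ Kp)
    (hfact : (Kp : Set G) = (KU : Set G) * ((Kp ⊓ M : Subgroup G) : Set G) * (KUb : Set G)) :
    ∃ Khat : Subgroup G,
      (Khat : Set G) = (KU : Set G) * (KMhat : Set G) * (Kp : Set G) ∧
      (KU : Set G) * (KMhat : Set G) * (Kp : Set G)
        = (KU : Set G) * (KMhat : Set G) * (KUb : Set G) ∧
      Kp ≤ Khat ∧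
      (∀ k ∈ Khat, ∀ x ∈ Kp, k * x * k⁻¹ ∈ Kp) ∧
      (∀ k ∈ Khat, ∃ m ∈ KMhat, m⁻¹ * k ∈ Kp) ∧
      KMhat ⊓ Kp = Kp ⊓ M := by
  -- KU ⊆ Kp from the factorization
  have hKU_Kp : ∀ u ∈ KU, u ∈ Kp := by
    intro u hu
    have h1 : u * 1 * 1 ∈ (KU : Set G) * ((Kp ⊓ M : Subgroup G) : Set G) * (KUb : Set G) :=
      Set.mul_mem_mul (Set.mul_mem_mul hu (Subgroup.one_mem _)) (Subgroup.one_mem _)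
    rw [← hfact] at h1
    simpa using h1
  -- define Khat
  refine ⟨{ carrier := (KMhat : Set G) * (Kp : Set G)
            one_mem' := ⟨1, Subgroup.one_mem _, 1, Subgroup.one_mem _, by simp⟩
            mul_mem' := ?_
            inv_mem' := ?_ }, ?_, ?_, ?_, ?_, ?_, ?_⟩
  · rintro a b ⟨m, hm, x, hx, rfl⟩ ⟨n, hn, y, hy, rfl⟩
    refine ⟨m * n, mul_mem hm hn, (n⁻¹ * x * n) * y, mul_mem ?_ hy, by group⟩
    simpa using hnormKp n⁻¹ (inv_mem hn) x hx
  · rintro a ⟨m, hm, x, hx, rfl⟩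
    refine ⟨m⁻¹, inv_mem hm, m * x⁻¹ * m⁻¹, hnormKp m hm x⁻¹ (inv_mem hx), by group⟩
  · -- KMhat * Kp = KU * KMhat * Kp
    show (KMhat : Set G) * (Kp : Set G) = _
    ext g
    constructor
    · rintro ⟨m, hm, x, hx, rfl⟩
      exact ⟨1 * m, Set.mul_mem_mul (Subgroup.one_mem KU) hm, x, hx, by simp⟩
    · rintro ⟨um, ⟨u, hu, m, hm, rfl⟩, x, hx, rfl⟩
      refine ⟨m, hm, (m⁻¹ * u * m) * x, mul_mem ?_ hx, by group⟩
      refine hKU_Kp _ ?_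
      simpa using hnormKU m⁻¹ (inv_mem hm) u hu
  · -- KU * KMhat * Kp = KU * KMhat * KUb
    have hcomm : (KMhat : Set G) * (KU : Set G) = (KU : Set G) * (KMhat : Set G) := by
      ext g
      constructor
      · rintro ⟨m, hm, u, hu, rfl⟩
        exact ⟨m * u * m⁻¹, hnormKU m hm u hu, m, hm, by group⟩
      · rintro ⟨u, hu, m, hm, rfl⟩
        refine ⟨m, hm, m⁻¹ * u * m, ?_, by group⟩
        simpa using hnormKU m⁻¹ (inv_mem hm) u hu
    have habs : (KMhat : Set G) * ((Kp ⊓ M : Subgroup G) : Set G) = (KMhat : Set G) := by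
      ext g
      constructor
      · rintro ⟨m, hm, c, hc, rfl⟩
        exact mul_mem hm (hsub hc)
      · intro hg
        exact ⟨g, hg, 1, Subgroup.one_mem _, by simp⟩
    have hAA : (KU : Set G) * (KU : Set G) = (KU : Set G) := by
      ext g
      constructor
      · rintro ⟨u, hu, v, hv, rfl⟩
        exact mul_mem hu hv
      · intro hg
        exact ⟨g, hg, 1, Subgroup.one_mem _, by simp⟩
    calc (KU : Set G) * (KMhat : Set G) * (Kp : Set G)
        = (KU : Set G) * (KMhat : Set G) *
            ((KU : Set G) * ((Kp ⊓ M : Subgroup G) : Set G) * (KUb : Set G)) := by rw [← hfact]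
      _ = (KU : Set G) * ((KMhat : Set G) * (KU : Set G)) *
            ((Kp ⊓ M : Subgroup G) : Set G) * (KUb : Set G) := by
            simp only [mul_assoc]
      _ = (KU : Set G) * ((KU : Set G) * (KMhat : Set G)) *
            ((Kp ⊓ M : Subgroup G) : Set G) * (KUb : Set G) := by rw [hcomm]
      _ = ((KU : Set G) * (KU : Set G)) * ((KMhat : Set G) *
            ((Kp ⊓ M : Subgroup G) : Set G)) * (KUb : Set G) := by
            simp only [mul_assoc]
      _ = (KU : Set G) * (KMhat : Set G) * (KUb : Set G) := by rw [hAA, habs]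
  · -- Kp ≤ Khat
    intro x hx
    exact ⟨1, Subgroup.one_mem _, x, hx, by simp⟩
  · -- normality
    rintro k ⟨m, hm, x, hx, rfl⟩ y hy
    have h1 : x * y * x⁻¹ ∈ Kp := mul_mem (mul_mem hx hy) (inv_mem hx)
    have h2 := hnormKp m hm _ h1
    have : m * x * y * (m * x)⁻¹ = m * (x * y * x⁻¹) * m⁻¹ := by group
    rw [this]
    exact h2
  · -- surjectivity onto quotient
    rintro k ⟨m, hm, x, hx, rfl⟩
    exact ⟨m, hm, by simpa using hx⟩
  · -- kernel
    ext g
    simp only [Subgroup.mem_inf]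
    exact ⟨fun ⟨h1, h2⟩ => ⟨h2, hKM_M h1⟩, fun ⟨h1, h2⟩ => ⟨hsub ⟨h1, h2⟩, h1⟩⟩
end
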